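/- arXiv:2011.00145 — 2 statements merged into one kernel-verified Lean document; each statement's English description precedes it below -/
import Mathlib

section
/- If Ω is a nonempty compact totally disconnected metric space, then the maximum diameter of an ε-component of Ω tends to zero as ε → 0⁺: for every σ > 0 there exists ε > 0 such that every ε-component of Ω has diameter at most σ. -/
open Metric Set Bornology

/-- `x` and `y` are joined by an `ε`-chain. -/
def IsEpsChain {Ω : Type*} [MetricSpace Ω] (ε : ℝ) (x y : Ω) : Prop :=
  ∃ (n : ℕ) (c : Fin (n + 1) → Ω), c 0 = x ∧ c (Fin.last n) = y ∧
    ∀ i : Fin n, dist (c i.castSucc) (c i.succ) < ε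

/-- The collection of `ε`-components of `Ω`. -/
def epsComponents (Ω : Type*) [MetricSpace Ω] (ε : ℝ) : Set (Set Ω) :=
  {E | ∃ x, E = {y | IsEpsChain ε x y}}

theorem stmt_6 {Ω : Type*} [MetricSpace Ω] [Nonempty Ω] [CompactSpace Ω]
    [TotallyDisconnectedSpace Ω] :
    ∀ σ > (0 : ℝ), ∃ ε > (0 : ℝ), ∀ E ∈ epsComponents Ω ε, Metric.diam E ≤ σ := by
  intro σ hσ
  -- choose small clopen neighborhoods
  have hcl : ∀ x : Ω, ∃ V : Set Ω, IsClopen V ∧ x ∈ V ∧ V ⊆ ball x (σ / 2) := fun x =>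
    compact_exists_isClopen_in_isOpen isOpen_ball (mem_ball_self (by linarith))
  choose V hVclopen hVmem hVball using hcl
  -- finite subcover
  obtain ⟨t, ht⟩ := isCompact_univ.elim_finite_subcover V (fun x => (hVclopen x).2)
    (fun x _ => mem_iUnion.2 ⟨x, hVmem x⟩)
  set l := t.toList with hl
  set n := l.length with hn
  set U : Fin n → Set Ω := fun i => V (l.get i) with hU
  -- disjointify
  set W : Fin n → Set Ω := fun i => U i \ ⋃ j ∈ Finset.Iio i, U j with hW
  have hWopen : ∀ i, IsOpen (W i) := by
    intro i
    have : IsClosed (⋃ j ∈ Finset.Iio i, U j) :=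
      isClosed_biUnion_finset (fun j _ => (hVclopen _).1)
    exact (hVclopen _).2.sdiff this
  have hWU : ∀ i, W i ⊆ U i := fun i => diff_subset
  have hWdisj : Pairwise (Function.onFun Disjoint W) := by
    intro i j hij
    rcases lt_or_gt_of_ne hij with h | h
    · refine Set.disjoint_left.2 fun z hzi hzj => ?_
      exact hzj.2 (mem_biUnion (Finset.mem_Iio.2 h) hzi.1)
    · refine Set.disjoint_left.2 fun z hzi hzj => ?_
      exact hzi.2 (mem_biUnion (Finset.mem_Iio.2 h) hzj.1)
  have hWcover : (univ : Set Ω) ⊆ ⋃ i, W i := by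
    intro y _
    have hy : ∃ i : Fin n, y ∈ U i := by
      obtain ⟨x, hxt, hyx⟩ := mem_iUnion₂.1 (ht (mem_univ y))
      obtain ⟨i, hi⟩ := List.get_of_mem (Finset.mem_toList.2 hxt)
      refine ⟨i, ?_⟩
      show y ∈ V (l.get i)
      rw [hi]; exact hyx
    classical
    set s : Finset (Fin n) := Finset.univ.filter (fun i => y ∈ U i) with hs
    have hsne : s.Nonempty := by
      obtain ⟨i, hi⟩ := hy
      exact ⟨i, by simp [hs, hi]⟩
    set i₀ := s.min' hsne with hi₀
    refine mem_iUnion.2 ⟨i₀, ?_, ?_⟩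
    · have := s.min'_mem hsne
      simpa [hs] using this
    · intro hmem
      obtain ⟨j, hj, hyj⟩ := mem_iUnion₂.1 hmem
      have hjs : j ∈ s := by simp [hs, hyj]
      exact absurd (s.min'_le j hjs) (not_le.2 (Finset.mem_Iio.1 hj))
  have hWdiam : ∀ i, Metric.diam (W i) ≤ σ := by
    intro i
    have h1 : W i ⊆ ball (l.get i) (σ / 2) := (hWU i).trans (hVball _)
    calc Metric.diam (W i) ≤ Metric.diam (ball (l.get i) (σ / 2)) :=
          Metric.diam_mono h1 isBounded_ball
      _ ≤ 2 * (σ / 2) := Metric.diam_ball (by linarith)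
      _ = σ := by ring
  -- Lebesgue number
  obtain ⟨δ, hδ, hball⟩ := lebesgue_number_lemma_of_metric isCompact_univ hWopen hWcover
  refine ⟨δ, hδ, ?_⟩
  rintro E ⟨x, rfl⟩
  obtain ⟨i₀, hxW⟩ := mem_iUnion.1 (hWcover (mem_univ x))
  have hsub : {y | IsEpsChain δ x y} ⊆ W i₀ := by
    rintro y ⟨m, c, hc0, hclast, hstep⟩
    have key : ∀ k : Fin (m + 1), c k ∈ W i₀ := by
      intro k
      induction k using Fin.induction with
      | zero => rwa [hc0]
      | succ i ih =>
        obtain ⟨j, hj⟩ := hball (c i.castSucc) (mem_univ _)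
        have hcj : c i.castSucc ∈ W j := hj (mem_ball_self hδ)
        have hji : j = i₀ := by
          by_contra hne
          exact Set.disjoint_left.1 (hWdisj hne) hcj ih
        subst hji
        exact hj (by simpa [mem_ball, dist_comm] using hstep i)
    rw [← hclast]; exact key _
  have hbdd : IsBounded (W i₀) :=
    isBounded_ball.subset ((hWU i₀).trans (hVball _))
  calc Metric.diam {y | IsEpsChain δ x y} ≤ Metric.diam (W i₀) := Metric.diam_mono hsub hbdd
    _ ≤ σ := hWdiam i₀
end

section
/- If Ω is a nonempty compact totally disconnected metric space, then the function η(ε) counting the number of ε-components of Ω is continuous from the left: lim_{ε ↑ ε₀} η(ε) = η(ε₀) for each ε₀ > 0. -/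
/-!
Every `ε₀`-chain is finite, so all its steps are shorter than some `δ < ε₀`. Hence the set of
pairs joined by an `ε₀`-chain, which is closed and so compact in `Ω × Ω`, is covered by the
increasing family of open sets of pairs joined by a `δ`-chain, `δ < ε₀`; a single `δ` then
suffices. The `ε`-chain relation, and with it the set of `ε`-components, is therefore the same
for every `ε ∈ [δ, ε₀]`, so `η` is constant on that interval.
-/

open Relation

def ChainRel {Ω : Type*} [MetricSpace Ω] (ε : ℝ) : Ω → Ω → Prop :=
  ReflTransGen fun a b => dist a b < ε

section ChainRel

variable {Ω : Type*} [MetricSpace Ω]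

lemma chainRel_of_fin {ε : ℝ} :
    ∀ (n : ℕ) (c : Fin (n + 1) → Ω), (∀ i : Fin n, dist (c i.castSucc) (c i.succ) < ε) →
      ChainRel ε (c 0) (c (Fin.last n))
  | 0, _, _ => .refl
  | n + 1, c, hc => by
    have hinit : ChainRel ε (c 0) (c (Fin.last n).castSucc) :=
      chainRel_of_fin n (c ∘ Fin.castSucc) fun i => by
        simpa only [Function.comp_apply, Fin.succ_castSucc] using hc i.castSucc
    exact hinit.tail (by simpa only [Fin.succ_last] using hc (Fin.last n))

lemma isEpsChain_iff_chainRel {ε : ℝ} {x y : Ω} : IsEpsChain ε x y ↔ ChainRel ε x y := by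
  constructor
  · rintro ⟨n, c, rfl, rfl, hc⟩
    exact chainRel_of_fin n c hc
  · intro h
    induction h with
    | refl => exact ⟨0, fun _ => x, rfl, rfl, fun i => i.elim0⟩
    | @tail b z _ hbz ih =>
      obtain ⟨n, c, h0, hl, hc⟩ := ih
      refine ⟨n + 1, Fin.snoc c z, by simpa using h0, by simp, Fin.lastCases ?_ fun j => ?_⟩
      · simpa [Fin.succ_last, hl] using hbz
      · simpa only [Fin.succ_castSucc, Fin.snoc_castSucc] using hc j

lemma ChainRel.mono {ε ε' : ℝ} (h : ε ≤ ε') {x y : Ω} (hc : ChainRel ε x y) :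
    ChainRel ε' x y :=
  ReflTransGen.mono (fun _ _ hd => hd.trans_le h) _ _ hc

lemma isOpen_setOf_chainRel {ε : ℝ} (hε : 0 < ε) :
    IsOpen {p : Ω × Ω | ChainRel ε p.1 p.2} := by
  refine Metric.isOpen_iff.2 fun p hp => ⟨ε, hε, fun q hq => ?_⟩
  rw [Metric.mem_ball, Prod.dist_eq, max_lt_iff] at hq
  exact .tail (.head hq.1 hp) (by rw [dist_comm]; exact hq.2)

lemma isClosed_setOf_chainRel {ε : ℝ} (hε : 0 < ε) :
    IsClosed {p : Ω × Ω | ChainRel ε p.1 p.2} := by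
  refine isOpen_compl_iff.1 (Metric.isOpen_iff.2 fun p hp => ⟨ε, hε, fun q hq hrel => hp ?_⟩)
  rw [Metric.mem_ball, Prod.dist_eq, max_lt_iff] at hq
  exact .tail (.head (by rw [dist_comm]; exact hq.1) hrel) hq.2

lemma ChainRel.exists_lt {ε : ℝ} (hε : 0 < ε) {x y : Ω} (h : ChainRel ε x y) :
    ∃ δ ∈ Set.Ioo 0 ε, ChainRel δ x y := by
  induction h with
  | refl => exact ⟨ε / 2, ⟨by linarith, by linarith⟩, .refl⟩
  | @tail b z _ hbz ih =>
    obtain ⟨δ, ⟨hδ, hδε⟩, hrel⟩ := ih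
    refine ⟨max δ ((dist b z + ε) / 2), ⟨lt_max_of_lt_left hδ, max_lt hδε (by linarith)⟩, ?_⟩
    exact (hrel.mono (le_max_left _ _)).tail
      (lt_max_of_lt_right (by linarith : dist b z < (dist b z + ε) / 2))

lemma exists_chainRel_eq_of_mem_Icc [CompactSpace Ω] {ε₀ : ℝ} (hε₀ : 0 < ε₀) :
    ∃ δ < ε₀, ∀ ε ∈ Set.Icc δ ε₀, (ChainRel ε : Ω → Ω → Prop) = ChainRel ε₀ := by
  have : Nonempty (Set.Ioo 0 ε₀) := ⟨⟨ε₀ / 2, by linarith, by linarith⟩⟩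
  obtain ⟨⟨δ, hδ, hδε₀⟩, hcover⟩ := (isClosed_setOf_chainRel hε₀).isCompact.elim_directed_cover
    (fun δ : Set.Ioo 0 ε₀ => {p : Ω × Ω | ChainRel δ p.1 p.2})
    (fun δ => isOpen_setOf_chainRel δ.2.1)
    (fun p hp => Set.mem_iUnion.2 <| by
      obtain ⟨δ, hδ, hrel⟩ := ChainRel.exists_lt hε₀ hp
      exact ⟨⟨δ, hδ⟩, hrel⟩)
    (Monotone.directed_le fun _ _ h _ hp => ChainRel.mono h hp)
  refine ⟨δ, hδε₀, fun ε hε => ?_⟩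
  ext x y
  exact ⟨ChainRel.mono hε.2, fun h => ChainRel.mono hε.1 (hcover (a := (x, y)) h)⟩

lemma epsComponents_eq_of_chainRel_eq {ε ε' : ℝ}
    (h : (ChainRel ε : Ω → Ω → Prop) = ChainRel ε') : epsComponents Ω ε = epsComponents Ω ε' := by
  simp only [epsComponents, isEpsChain_iff_chainRel, h]

end ChainRel

theorem stmt_7_general {Ω : Type*} [MetricSpace Ω] [CompactSpace Ω] (ε₀ : ℝ) (hε₀ : 0 < ε₀) :
    Filter.Tendsto (fun ε : ℝ => ((epsComponents Ω ε).ncard : ℝ))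
      (nhdsWithin ε₀ (Set.Iio ε₀)) (nhds ((epsComponents Ω ε₀).ncard : ℝ)) := by
  obtain ⟨δ, hδ, hconst⟩ := exists_chainRel_eq_of_mem_Icc (Ω := Ω) hε₀
  refine tendsto_const_nhds.congr' ?_
  filter_upwards [Ioo_mem_nhdsLT hδ] with ε hε
  rw [epsComponents_eq_of_chainRel_eq (hconst ε ⟨hε.1.le, hε.2.le⟩)]

theorem stmt_7 {Ω : Type*} [MetricSpace Ω] [Nonempty Ω] [CompactSpace Ω]
    [TotallyDisconnectedSpace Ω] (ε₀ : ℝ) (hε₀ : 0 < ε₀) :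
    Filter.Tendsto (fun ε : ℝ => ((epsComponents Ω ε).ncard : ℝ))
      (nhdsWithin ε₀ (Set.Iio ε₀)) (nhds ((epsComponents Ω ε₀).ncard : ℝ)) :=
  stmt_7_general ε₀ hε₀
end
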